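/- arXiv:2511.03529 — 2 statements merged into one kernel-verified Lean document; each statement's English description precedes it below -/
import Mathlib

section
/- Let n ≥ 2, s ∈ {1,…,n}, t ∈ (0,1] with s·t ≥ 1, and let h ∈ ℝⁿ. Let S* ⊆ {1,…,n} be a set of indices of s largest entries of h (by value), let u ∈ ℝ^{S*} be the Euclidean projection of the restriction of h to S* onto the unit-capped simplex Δ⁺_t = {u : Σ_i u_i = 1, 0 ≤ u_i ≤ t}, and define w ∈ ℝⁿ by w_i = u_i for i ∈ S* and w_i = 0 for i ∉ S*. Then w is a minimizer of ‖w′ − h‖₂² over all w′ in the sparse unit-capped simplex Δ⁺_{t,ℓ₀}; i.e., the three-step procedure (select the s largest entries, take their support, project onto the unit-capped simplex on that support) exactly solves the projection of h onto Δ⁺_{t,ℓ₀}. -/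
/-!
Let `w` be any point of `Δ⁺_{t,ℓ₀}`, supported on some `T` with `#T ≤ s = #S`. Exchanging
entries moves `w` onto `S`: a permutation `σ` that fixes `T ∩ S` and sends `T \ S` into `S \ T`
turns `w` into `w ∘ σ⁻¹`, which lies in the capped simplex on `S`. Since `σ` only moves mass
onto entries of `h` that are at least as large, and `‖w ∘ σ⁻¹‖ = ‖w‖`, the rearranged point is no
farther from `h`. On the other hand `u` is at least as close to `h` as `w ∘ σ⁻¹` on `S`, and the
two agree (both vanish) off `S`.
-/

/-- The sparse unit-capped simplex `Δ⁺_{t,ℓ₀} ⊆ ℝⁿ`. -/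
def sparseCappedSimplex (n : ℕ) (t : ℝ) (s : ℕ) : Set (Fin n → ℝ) :=
  {w | (∑ i, w i) = 1 ∧ (∀ i, 0 ≤ w i ∧ w i ≤ t) ∧
       ∃ S : Finset (Fin n), S.card ≤ s ∧ ∀ i ∉ S, w i = 0}

open Finset

theorem Finset.exists_perm_mapsTo_fixing_inter {α : Type*} [DecidableEq α] {S T : Finset α}
    (hTS : #T ≤ #S) : ∃ σ : Equiv.Perm α, ∀ j ∈ T, σ j ∈ S ∧ (j ∈ S → σ j = j) := by
  induction hm : #(T \ S) generalizing T with
  | zero =>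
    rw [card_eq_zero, sdiff_eq_empty_iff_subset] at hm
    exact ⟨1, fun j hj => ⟨hm hj, fun _ => rfl⟩⟩
  | succ m ih =>
    obtain ⟨j, hj⟩ : (T \ S).Nonempty := by rw [← card_pos]; omega
    obtain ⟨k, hk⟩ : (S \ T).Nonempty := by
      rw [← card_pos]
      have := card_sdiff_add_card_inter T S
      have := card_sdiff_add_card_inter S T
      rw [inter_comm] at this
      omega
    rw [mem_sdiff] at hj hk
    -- swap `j ∈ T \ S` with `k ∈ S \ T` and recurse on the exchanged support
    have hT'card : #(insert k (T.erase j)) = #T := by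
      rw [card_insert_of_notMem (by simp [hk.2]), card_erase_add_one hj.1]
    have hT'S : insert k (T.erase j) \ S = (T \ S).erase j := by
      ext i
      rcases eq_or_ne i k with rfl | hik
      · simp [hk.1]
      · simp [hik, and_assoc]
    obtain ⟨τ, hτ⟩ :=
      ih (hT'card ▸ hTS) (by rw [hT'S, card_erase_of_mem (mem_sdiff.2 hj), hm]; rfl)
    refine ⟨τ * Equiv.swap j k, fun i hi => ?_⟩
    by_cases hij : i = j
    · subst hij
      simpa [hj.2] using (hτ k (mem_insert_self _ _)).1
    · rw [Equiv.Perm.mul_apply, Equiv.swap_apply_of_ne_of_ne hij (ne_of_mem_of_not_mem hi hk.2)]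
      exact hτ i (mem_insert_of_mem (mem_erase.2 ⟨hij, hi⟩))

theorem sum_sq_sub_perm_symm_le {ι : Type*} [Fintype ι] (w h : ι → ℝ) (σ : Equiv.Perm ι)
    (hσ : ∀ i, w i * h i ≤ w i * h (σ i)) :
    ∑ i, (w (σ.symm i) - h i) ^ 2 ≤ ∑ i, (w i - h i) ^ 2 :=
  calc ∑ i, (w (σ.symm i) - h i) ^ 2
      = ∑ i, ((w i - h (σ i)) ^ 2 - h (σ i) ^ 2) + ∑ i, h (σ i) ^ 2 := by
        rw [← sum_add_distrib, ← Equiv.sum_comp σ]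
        simp
    _ ≤ ∑ i, ((w i - h i) ^ 2 - h i ^ 2) + ∑ i, h i ^ 2 := by
        rw [Equiv.sum_comp σ (fun i => h i ^ 2)]
        gcongr ?_ + _
        exact sum_le_sum fun i _ => by nlinarith [hσ i]
    _ = ∑ i, (w i - h i) ^ 2 := by
        rw [← sum_add_distrib]
        simp

theorem sum_sq_sub_le_of_sum_sq_sub_le_of_eqOn_compl {ι : Type*} [Fintype ι] [DecidableEq ι]
    {S : Finset ι} {u v h : ι → ℝ} (huv : ∀ i ∉ S, u i = v i)
    (hS : ∑ i ∈ S, (u i - h i) ^ 2 ≤ ∑ i ∈ S, (v i - h i) ^ 2) :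
    ∑ i, (u i - h i) ^ 2 ≤ ∑ i, (v i - h i) ^ 2 := by
  rw [← sum_add_sum_compl S, ← sum_add_sum_compl S (fun i => (v i - h i) ^ 2)]
  have hSc : ∑ i ∈ Sᶜ, (u i - h i) ^ 2 = ∑ i ∈ Sᶜ, (v i - h i) ^ 2 :=
    sum_congr rfl fun i hi => by rw [huv i (mem_compl.1 hi)]
  linarith

theorem stmt2_general (n s : ℕ) (t : ℝ)
    (ht0 : 0 < t)
    (h : Fin n → ℝ) (S : Finset (Fin n)) (hScard : S.card = s)
    (hSlargest : ∀ i ∈ S, ∀ j ∉ S, h j ≤ h i)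
    (u : Fin n → ℝ)
    (hu_supp : ∀ i ∉ S, u i = 0)
    (hu_sum : ∑ i ∈ S, u i = 1)
    (hu_bdd : ∀ i ∈ S, 0 ≤ u i ∧ u i ≤ t)
    (hu_min : ∀ u' : Fin n → ℝ, (∑ i ∈ S, u' i = 1) → (∀ i ∈ S, 0 ≤ u' i ∧ u' i ≤ t) →
      ∑ i ∈ S, (u i - h i) ^ 2 ≤ ∑ i ∈ S, (u' i - h i) ^ 2) :
    u ∈ sparseCappedSimplex n t s ∧
      ∀ w' ∈ sparseCappedSimplex n t s,
        ∑ i, (u i - h i) ^ 2 ≤ ∑ i, (w' i - h i) ^ 2 := by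
  have hu_total : ∑ i, u i = 1 := by
    rwa [← sum_subset (subset_univ S) fun i _ hi => hu_supp i hi]
  refine ⟨⟨hu_total, fun i => ?_, S, hScard.le, hu_supp⟩, ?_⟩
  · by_cases hi : i ∈ S
    · exact hu_bdd i hi
    · rw [hu_supp i hi]
      exact ⟨le_rfl, ht0.le⟩
  rintro w ⟨hw_sum, hw_bdd, T, hT, hwT⟩
  obtain ⟨σ, hσ⟩ := exists_perm_mapsTo_fixing_inter (hT.trans hScard.ge)
  have hv_supp : ∀ i ∉ S, w (σ.symm i) = 0 :=
    fun i hi => hwT _ fun hT => hi (by simpa using (hσ _ hT).1)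
  have hv_sum : ∑ i ∈ S, w (σ.symm i) = 1 := by
    rw [sum_subset (subset_univ S) fun i _ hi => hv_supp i hi, Equiv.sum_comp σ.symm w, hw_sum]
  have hσh : ∀ j, w j * h j ≤ w j * h (σ j) := by
    intro j
    by_cases hjT : j ∈ T
    · by_cases hjS : j ∈ S
      · rw [(hσ j hjT).2 hjS]
      · exact mul_le_mul_of_nonneg_left (hSlargest _ (hσ j hjT).1 j hjS) (hw_bdd j).1
    · simp [hwT j hjT]
  calc ∑ i, (u i - h i) ^ 2 ≤ ∑ i, (w (σ.symm i) - h i) ^ 2 :=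
        sum_sq_sub_le_of_sum_sq_sub_le_of_eqOn_compl
          (fun i hi => by rw [hu_supp i hi, hv_supp i hi])
          (hu_min _ hv_sum fun i _ => hw_bdd _)
    _ ≤ ∑ i, (w i - h i) ^ 2 := sum_sq_sub_perm_symm_le w h σ hσh

/-- The three-step projection (select `s` largest entries of `h`, keep that support, project the
restriction onto the unit-capped simplex `Δ⁺_t`) exactly solves the Euclidean projection of `h`
onto the sparse unit-capped simplex `Δ⁺_{t,ℓ₀}`.  Here `S` is a set of indices of `s` largest
entries of `h`, and `u` (supported on `S`) is the Euclidean projection of the restriction of `h`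
to `S` onto the unit-capped simplex on `S`; extending `u` by zero off `S` gives exactly `u`. -/
theorem stmt2 (n s : ℕ) (t : ℝ) (hn : 2 ≤ n) (hs1 : 1 ≤ s) (hsn : s ≤ n)
    (ht0 : 0 < t) (ht1 : t ≤ 1) (hst : 1 ≤ (s : ℝ) * t)
    (h : Fin n → ℝ) (S : Finset (Fin n)) (hScard : S.card = s)
    (hSlargest : ∀ i ∈ S, ∀ j ∉ S, h j ≤ h i)
    (u : Fin n → ℝ)
    (hu_supp : ∀ i ∉ S, u i = 0)
    (hu_sum : ∑ i ∈ S, u i = 1)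
    (hu_bdd : ∀ i ∈ S, 0 ≤ u i ∧ u i ≤ t)
    (hu_min : ∀ u' : Fin n → ℝ, (∑ i ∈ S, u' i = 1) → (∀ i ∈ S, 0 ≤ u' i ∧ u' i ≤ t) →
      ∑ i ∈ S, (u i - h i) ^ 2 ≤ ∑ i ∈ S, (u' i - h i) ^ 2) :
    u ∈ sparseCappedSimplex n t s ∧
      ∀ w' ∈ sparseCappedSimplex n t s,
        ∑ i, (u i - h i) ^ 2 ≤ ∑ i, (w' i - h i) ^ 2 :=
  stmt2_general n s t ht0 h S hScard hSlargest u hu_supp hu_sum hu_bdd hu_min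
end

section
/- Let n ≥ 2, s ∈ {1,…,n}, t ∈ (0,1] with s·t ≥ 1, and let h ∈ ℝⁿ. Then there exists a minimizer w of ‖w′ − h‖₂² over the sparse unit-capped simplex Δ⁺_{t,ℓ₀} whose support is contained in a set of indices of the s largest entries of h. More precisely, if w is any minimizer, i is an index among the s largest entries of h with w_i = 0, j is an index not among the s largest entries of h with w_j > 0, then the vector w̃ obtained from w by setting w̃_j = 0 and w̃_i = w_j (all other entries unchanged) lies in Δ⁺_{t,ℓ₀} and satisfies ‖w̃ − h‖₂² ≤ ‖w − h‖₂². -/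
open Finset Function

theorem exists_card_eq_forall_notMem_le {ι α : Type*} [Fintype ι] [DecidableEq ι]
    [LinearOrder α] (f : ι → α) {k : ℕ} (hk : k ≤ Fintype.card ι) :
    ∃ S : Finset ι, #S = k ∧ ∀ i ∈ S, ∀ j ∉ S, f j ≤ f i := by
  induction k with
  | zero => exact ⟨∅, rfl, by simp⟩
  | succ k ih =>
    obtain ⟨S, hcard, hS⟩ := ih (Nat.le_of_succ_le hk)
    have hne : Sᶜ.Nonempty := by
      rw [← card_pos, card_compl, hcard]
      omega
    obtain ⟨m, hmS, hm⟩ := exists_max_image Sᶜ f hne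
    rw [mem_compl] at hmS
    refine ⟨insert m S, by rw [card_insert_of_notMem hmS, hcard], fun i hi j hj => ?_⟩
    rw [mem_insert, not_or] at hj
    rcases mem_insert.mp hi with rfl | hi
    · exact hm j (mem_compl.mpr hj.2)
    · exact hS i hi j hj.2

theorem update_update_eq_comp_swap {ι α : Type*} [DecidableEq ι] [Zero α] {w : ι → α} {i : ι}
    (hi : w i = 0) (j : ι) : update (update w j 0) i (w j) = w ∘ Equiv.swap i j := by
  funext l
  rcases eq_or_ne l i with rfl | hli
  · simp
  rcases eq_or_ne l j with rfl | hlj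
  · simp [hli, hi]
  · simp [hli, hlj, Equiv.swap_apply_of_ne_of_ne]

theorem sum_mul_le_sum_comp_swap_mul {ι R : Type*} [Fintype ι] [DecidableEq ι] [CommRing R]
    [LinearOrder R] [IsStrictOrderedRing R] {w h : ι → R} {i j : ι} (hw : w i ≤ w j)
    (hh : h j ≤ h i) : ∑ l, w l * h l ≤ ∑ l, w (Equiv.swap i j l) * h l := by
  rcases eq_or_ne i j with rfl | hij
  · simp
  have hdiff : ∑ l, (w (Equiv.swap i j l) * h l - w l * h l) = (w j - w i) * (h i - h j) := by
    rw [Fintype.sum_eq_add i j hij fun l hl => by simp [Equiv.swap_apply_of_ne_of_ne hl.1 hl.2]]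
    simp only [Equiv.swap_apply_left, Equiv.swap_apply_right]
    ring
  rw [sum_sub_distrib] at hdiff
  nlinarith [mul_nonneg (sub_nonneg.mpr hw) (sub_nonneg.mpr hh)]

theorem sum_sq_sub_comp_perm_le {ι R : Type*} [Fintype ι] [CommRing R] [LinearOrder R]
    [IsStrictOrderedRing R] {w h : ι → R} (σ : Equiv.Perm ι)
    (hσ : ∑ l, w l * h l ≤ ∑ l, w (σ l) * h l) :
    ∑ l, (w (σ l) - h l) ^ 2 ≤ ∑ l, (w l - h l) ^ 2 := by
  have expand : ∀ v : ι → R,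
      ∑ l, (v l - h l) ^ 2 = ∑ l, v l ^ 2 - 2 * ∑ l, v l * h l + ∑ l, h l ^ 2 := by
    intro v
    simp only [sub_sq, sum_add_distrib, sum_sub_distrib, mul_sum]
    congr 2
    exact sum_congr rfl fun l _ => by ring
  rw [expand, expand, Equiv.sum_comp σ fun l => w l ^ 2]
  linarith

section SparseCappedSimplex

variable {n s : ℕ} {t : ℝ}

theorem comp_perm_mem_sparseCappedSimplex {w : Fin n → ℝ} (hw : w ∈ sparseCappedSimplex n t s)
    (σ : Equiv.Perm (Fin n)) : w ∘ σ ∈ sparseCappedSimplex n t s := by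
  obtain ⟨hsum, hbd, S, hcard, hS⟩ := hw
  refine ⟨by rwa [comp_def, Equiv.sum_comp σ w], fun l => hbd (σ l), S.map σ.symm.toEmbedding,
    by rwa [card_map], fun l hl => hS (σ l) fun h => hl ?_⟩
  exact mem_map_equiv.mpr (by simpa using h)

theorem exists_mem_eq_zero_of_ne_zero {w : Fin n → ℝ} (hw : w ∈ sparseCappedSimplex n t s)
    {S : Finset (Fin n)} (hS : #S = s) {j : Fin n} (hjS : j ∉ S) (hj : w j ≠ 0) :
    ∃ i ∈ S, w i = 0 := by
  by_contra! hA
  obtain ⟨-, -, S₀, hS₀, hzero⟩ := hw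
  have hsub : insert j S ⊆ S₀ := by
    intro l hl
    by_contra hl₀
    rcases mem_insert.mp hl with rfl | hl
    · exact hj (hzero l hl₀)
    · exact hA l hl (hzero l hl₀)
  have := card_le_card hsub
  rw [card_insert_of_notMem hjS, hS] at this
  omega

theorem isCompact_sparseCappedSimplex : IsCompact (sparseCappedSimplex n t s) := by
  have hclosed : IsClosed (sparseCappedSimplex n t s) := by
    have heq : sparseCappedSimplex n t s = {w | ∑ i, w i = 1} ∩
        (⋂ i, {w | 0 ≤ w i ∧ w i ≤ t}) ∩
        ⋃ S ∈ {S : Finset (Fin n) | #S ≤ s}, ⋂ i ∈ (Sᶜ : Set (Fin n)), {w | w i = 0} := by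
      ext w
      simp [sparseCappedSimplex, and_assoc]
    rw [heq]
    refine ((isClosed_eq (by fun_prop) continuous_const).inter
      (isClosed_iInter fun i => (isClosed_le continuous_const (continuous_apply i)).inter
        (isClosed_le (continuous_apply i) continuous_const))).inter
      ((Set.toFinite _).isClosed_biUnion fun S _ => isClosed_biInter fun i _ =>
        isClosed_eq (continuous_apply i) continuous_const)
  exact IsCompact.of_isClosed_subset (isCompact_univ_pi fun _ => isCompact_Icc (a := 0) (b := t))
    hclosed fun w hw l _ => hw.2.1 l

theorem sparseCappedSimplex_nonempty (hsn : s ≤ n) (hst : 1 ≤ (s : ℝ) * t) :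
    (sparseCappedSimplex n t s).Nonempty := by
  obtain ⟨S, -, hS⟩ := exists_subset_card_eq (s := (univ : Finset (Fin n))) (by simpa using hsn)
  have hs : (0 : ℝ) < s :=
    Nat.cast_pos.mpr (Nat.pos_of_ne_zero fun h0 => by simp [h0] at hst; linarith)
  have hst' : (s : ℝ)⁻¹ ≤ t := (inv_le_iff_one_le_mul₀' hs).mpr hst
  refine ⟨fun l => if l ∈ S then (s : ℝ)⁻¹ else 0, ?_, fun l => ?_, S, hS.le, fun l hl => if_neg hl⟩
  · rw [sum_ite_mem, univ_inter, sum_const, hS, nsmul_eq_mul, mul_inv_cancel₀ hs.ne']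
  · dsimp only
    split_ifs
    · exact ⟨inv_nonneg.mpr hs.le, hst'⟩
    · exact ⟨le_rfl, (inv_nonneg.mpr hs.le).trans hst'⟩

theorem exists_forall_sum_sq_sub_le (hsn : s ≤ n) (hst : 1 ≤ (s : ℝ) * t) (h : Fin n → ℝ) :
    ∃ w ∈ sparseCappedSimplex n t s,
      ∀ w' ∈ sparseCappedSimplex n t s, ∑ l, (w l - h l) ^ 2 ≤ ∑ l, (w' l - h l) ^ 2 :=
  isCompact_sparseCappedSimplex.exists_isMinOn (sparseCappedSimplex_nonempty hsn hst)
    (f := fun w => ∑ l, (w l - h l) ^ 2) (by fun_prop)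

theorem swap_mem_sparseCappedSimplex_and_sum_sq_sub_le {w h : Fin n → ℝ}
    (hw : w ∈ sparseCappedSimplex n t s) {i j : Fin n} (hi : w i = 0) (hh : h j ≤ h i) :
    update (update w j 0) i (w j) ∈ sparseCappedSimplex n t s ∧
      ∑ l, (update (update w j 0) i (w j) l - h l) ^ 2 ≤ ∑ l, (w l - h l) ^ 2 := by
  rw [update_update_eq_comp_swap hi]
  refine ⟨comp_perm_mem_sparseCappedSimplex hw _, sum_sq_sub_comp_perm_le _ ?_⟩
  exact sum_mul_le_sum_comp_swap_mul (hi ▸ (hw.2.1 j).1) hh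

theorem card_filter_comp_swap_lt {w : Fin n → ℝ} {S : Finset (Fin n)} {i j : Fin n}
    (hiS : i ∈ S) (hi : w i = 0) (hjS : j ∉ S) (hj : w j ≠ 0) :
    #{l | w (Equiv.swap i j l) ≠ 0 ∧ l ∉ S} < #{l | w l ≠ 0 ∧ l ∉ S} := by
  refine card_lt_card ((ssubset_iff_of_subset fun l => ?_).mpr ⟨j, by simp [hj, hjS, hi]⟩)
  simp only [mem_filter, mem_univ, true_and, and_imp]
  intro hl hlS
  have hli : l ≠ i := ne_of_mem_of_not_mem hiS hlS |>.symm
  rcases eq_or_ne l j with rfl | hlj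
  · simp [hi] at hl
  · rw [Equiv.swap_apply_of_ne_of_ne hli hlj] at hl
    exact ⟨hl, hlS⟩

theorem exists_forall_sum_sq_sub_le_support_subset {h : Fin n → ℝ} {S : Finset (Fin n)}
    (hS : #S = s) (htop : ∀ i ∈ S, ∀ j ∉ S, h j ≤ h i) {w : Fin n → ℝ}
    (hw : w ∈ sparseCappedSimplex n t s)
    (hmin : ∀ w' ∈ sparseCappedSimplex n t s, ∑ l, (w l - h l) ^ 2 ≤ ∑ l, (w' l - h l) ^ 2) :
    ∃ w₀ ∈ sparseCappedSimplex n t s,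
      (∀ w' ∈ sparseCappedSimplex n t s, ∑ l, (w₀ l - h l) ^ 2 ≤ ∑ l, (w' l - h l) ^ 2) ∧
      ∀ i, w₀ i ≠ 0 → i ∈ S := by
  let M := {w | w ∈ sparseCappedSimplex n t s ∧
    ∀ w' ∈ sparseCappedSimplex n t s, ∑ l, (w l - h l) ^ 2 ≤ ∑ l, (w' l - h l) ^ 2}
  let offSupport (v : Fin n → ℝ) : ℕ := #{l | v l ≠ 0 ∧ l ∉ S}
  obtain ⟨hw₀, hmin₀⟩ := argminOn_mem offSupport M ⟨w, hw, hmin⟩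
  refine ⟨_, hw₀, hmin₀, fun j hj => by_contra fun hjS => ?_⟩
  obtain ⟨i, hiS, hi⟩ := exists_mem_eq_zero_of_ne_zero hw₀ hS hjS hj
  obtain ⟨hmem, hle⟩ := swap_mem_sparseCappedSimplex_and_sum_sq_sub_le hw₀ hi (htop i hiS j hjS)
  rw [update_update_eq_comp_swap hi] at hmem hle
  exact not_lt_argminOn offSupport M ⟨hmem, fun w' hw' => hle.trans (hmin₀ w' hw')⟩
    (card_filter_comp_swap_lt hiS hi hjS hj)

end SparseCappedSimplex

theorem stmt3_general (n s : ℕ) (t : ℝ) (hsn : s ≤ n)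
    (hst : 1 ≤ (s : ℝ) * t) (h : Fin n → ℝ) :
    (∃ w ∈ sparseCappedSimplex n t s,
      (∀ w' ∈ sparseCappedSimplex n t s, ∑ l, (w l - h l) ^ 2 ≤ ∑ l, (w' l - h l) ^ 2) ∧
      ∃ S : Finset (Fin n), S.card = s ∧ (∀ i ∈ S, ∀ j ∉ S, h j ≤ h i) ∧
        ∀ i, w i ≠ 0 → i ∈ S) ∧
    (∀ w ∈ sparseCappedSimplex n t s,
      (∀ w' ∈ sparseCappedSimplex n t s, ∑ l, (w l - h l) ^ 2 ≤ ∑ l, (w' l - h l) ^ 2) →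
      ∀ S : Finset (Fin n), S.card = s → (∀ i ∈ S, ∀ j ∉ S, h j ≤ h i) →
      ∀ i ∈ S, w i = 0 →
      ∀ j ∉ S, 0 < w j →
        Function.update (Function.update w j 0) i (w j) ∈ sparseCappedSimplex n t s ∧
        ∑ l, (Function.update (Function.update w j 0) i (w j) l - h l) ^ 2 ≤
          ∑ l, (w l - h l) ^ 2) := by
  refine ⟨?_, fun w hw _ S _ htop i hiS hi j hjS _ =>
    swap_mem_sparseCappedSimplex_and_sum_sq_sub_le hw hi (htop i hiS j hjS)⟩
  obtain ⟨S, hS, htop⟩ := exists_card_eq_forall_notMem_le h (hsn.trans (Fintype.card_fin n).ge)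
  obtain ⟨w, hw, hmin⟩ := exists_forall_sum_sq_sub_le hsn hst h
  obtain ⟨w₀, hw₀, hmin₀, hsupp⟩ := exists_forall_sum_sq_sub_le_support_subset hS htop hw hmin
  exact ⟨w₀, hw₀, hmin₀, S, hS, htop, hsupp⟩

/-- Some minimizer of `‖w' - h‖₂²` over the sparse unit-capped simplex has support contained in a
set of indices of the `s` largest entries of `h`; more precisely, swapping any positive weight
placed off the `s` largest entries onto a zero weight among the `s` largest entries stays in the
set and does not increase the squared Euclidean distance to `h`. -/
theorem stmt3 (n s : ℕ) (t : ℝ) (hn : 2 ≤ n) (hs1 : 1 ≤ s) (hsn : s ≤ n)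
    (ht0 : 0 < t) (ht1 : t ≤ 1) (hst : 1 ≤ (s : ℝ) * t) (h : Fin n → ℝ) :
    (∃ w ∈ sparseCappedSimplex n t s,
      (∀ w' ∈ sparseCappedSimplex n t s, ∑ l, (w l - h l) ^ 2 ≤ ∑ l, (w' l - h l) ^ 2) ∧
      ∃ S : Finset (Fin n), S.card = s ∧ (∀ i ∈ S, ∀ j ∉ S, h j ≤ h i) ∧
        ∀ i, w i ≠ 0 → i ∈ S) ∧
    (∀ w ∈ sparseCappedSimplex n t s,
      (∀ w' ∈ sparseCappedSimplex n t s, ∑ l, (w l - h l) ^ 2 ≤ ∑ l, (w' l - h l) ^ 2) →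
      ∀ S : Finset (Fin n), S.card = s → (∀ i ∈ S, ∀ j ∉ S, h j ≤ h i) →
      ∀ i ∈ S, w i = 0 →
      ∀ j ∉ S, 0 < w j →
        Function.update (Function.update w j 0) i (w j) ∈ sparseCappedSimplex n t s ∧
        ∑ l, (Function.update (Function.update w j 0) i (w j) l - h l) ^ 2 ≤
          ∑ l, (w l - h l) ^ 2) :=
  stmt3_general n s t hsn hst h
end
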